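/- arXiv:1906.00801 — 4 statements merged into one kernel-verified Lean document; each statement's English description precedes it below -/
import Mathlib

section
/- Let $X$ and $Y$ be locally compact Hausdorff topological spaces, let $f\colon X\to Y$ be continuous, and let $y_0\in Y$ be a point such that $f^{-1}(y_0)$ is compact. Then there exist an open neighbourhood $B$ of $f^{-1}(y_0)$ in $X$ and an open neighbourhood $U$ of $y_0$ in $Y$ such that $f(B)\subset U$ and the restriction $f|_B\colon B\to U$ is a proper map. -/
/-- Lemma 5.7(1): for a continuous map `f : X → Y` between locally compact Hausdorff
spaces with `f ⁻¹' {y₀}` compact, there are open neighbourhoods `B ⊇ f ⁻¹' {y₀}` and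
`U ∋ y₀` with `f '' B ⊆ U` such that the restriction `f|_B : B → U` is proper. -/
theorem stmt_0 {X Y : Type*} [TopologicalSpace X] [TopologicalSpace Y]
    [LocallyCompactSpace X] [T2Space X] [LocallyCompactSpace Y] [T2Space Y]
    (f : X → Y) (hf : Continuous f) (y₀ : Y) (hcpt : IsCompact (f ⁻¹' {y₀})) :
    ∃ (B : Set X) (U : Set Y), IsOpen B ∧ f ⁻¹' {y₀} ⊆ B ∧ IsOpen U ∧ y₀ ∈ U ∧
      f '' B ⊆ U ∧
      ∀ K : Set Y, K ⊆ U → IsCompact K → IsCompact (B ∩ f ⁻¹' K) := by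
  obtain ⟨C, hC, hsub⟩ := exists_compact_superset hcpt
  set V : Set X := interior C with hV
  have hVopen : IsOpen V := isOpen_interior
  have hclV : IsCompact (closure V) :=
    hC.of_isClosed_subset isClosed_closure
      ((closure_minimal interior_subset hC.isClosed))
  -- frontier of V is compact
  have hfr : IsCompact (closure V \ V) :=
    hclV.of_isClosed_subset (isClosed_closure.sdiff hVopen) Set.diff_subset
  have hfrim : IsCompact (f '' (closure V \ V)) := hfr.image hf
  have hy0 : y₀ ∉ f '' (closure V \ V) := by
    rintro ⟨x, ⟨_, hxV⟩, hfx⟩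
    exact hxV (hsub (by simp [hfx]))
  -- separate y₀ from the compact image
  have hUop : IsOpen (f '' (closure V \ V))ᶜ := hfrim.isClosed.isOpen_compl
  refine ⟨V ∩ f ⁻¹' (f '' (closure V \ V))ᶜ, (f '' (closure V \ V))ᶜ,
    hVopen.inter (hUop.preimage hf), ?_, hUop, hy0, ?_, ?_⟩
  · intro x hx
    have hxy : f x = y₀ := hx
    refine ⟨hsub hx, fun h => hy0 (hxy ▸ h)⟩
  · rintro y ⟨x, ⟨_, hx2⟩, rfl⟩
    exact hx2
  · intro K hKU hK
    have hKcl : IsClosed (f ⁻¹' K) := (hK.isClosed).preimage hf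
    have heq : (V ∩ f ⁻¹' (f '' (closure V \ V))ᶜ) ∩ f ⁻¹' K
        = closure V ∩ f ⁻¹' K := by
      apply Set.Subset.antisymm
      · exact Set.inter_subset_inter_left _
          (Set.inter_subset_left.trans subset_closure)
      · rintro x ⟨hxcl, hxK⟩
        have hxnot : f x ∉ f '' (closure V \ V) := fun h => hKU hxK h
        have hxV : x ∈ V := by
          by_contra hxV
          exact hxnot ⟨x, ⟨hxcl, hxV⟩, rfl⟩
        exact ⟨⟨hxV, hxnot⟩, hxK⟩
    rw [heq]
    exact hclV.of_isClosed_subset (isClosed_closure.inter hKcl)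
      Set.inter_subset_left
end

section
/- Let $S\subset\mathbb R^n$ be a finite set such that the origin lies in the interior of the convex hull of $S$, and let $c_b>0$ for each $b\in S$. Define $f\colon\mathbb R^n\to\mathbb R$ by $f(y)=\sum_{b\in S}c_b\,e^{\langle b,y\rangle}$. Then $f$ is strictly convex, $f$ is proper and bounded from below (in particular $f(y)\to\infty$ as $\|y\|\to\infty$), and consequently $f$ attains a global minimum at a unique point of $\mathbb R^n$. -/
open scoped RealInnerProductSpace

section Aux

variable {n : ℕ}

/-- If 0 is interior to the convex hull of S, then S spans. -/
lemma aux_span (S : Finset (EuclideanSpace ℝ (Fin n)))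
    (h0 : (0 : EuclideanSpace ℝ (Fin n)) ∈
      interior (convexHull ℝ (S : Set (EuclideanSpace ℝ (Fin n))))) :
    Submodule.span ℝ (S : Set (EuclideanSpace ℝ (Fin n))) = ⊤ := by
  apply Submodule.eq_top_of_nonempty_interior'
  refine ⟨0, ?_⟩
  have h1 : convexHull ℝ (S : Set (EuclideanSpace ℝ (Fin n))) ⊆
      (Submodule.span ℝ (S : Set (EuclideanSpace ℝ (Fin n))) : Set _) :=
    convexHull_min Submodule.subset_span (Submodule.span ℝ _).convex
  exact interior_mono h1 h0

lemma aux_sep (S : Finset (EuclideanSpace ℝ (Fin n)))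
    (h0 : (0 : EuclideanSpace ℝ (Fin n)) ∈
      interior (convexHull ℝ (S : Set (EuclideanSpace ℝ (Fin n)))))
    {w : EuclideanSpace ℝ (Fin n)} (hw : w ≠ 0) :
    ∃ b ∈ S, ⟪b, w⟫ ≠ 0 := by
  by_contra h
  push_neg at h
  have hwspan : w ∈ Submodule.span ℝ (S : Set (EuclideanSpace ℝ (Fin n))) := by
    rw [aux_span S h0]; trivial
  have hP : ∀ u ∈ Submodule.span ℝ (S : Set (EuclideanSpace ℝ (Fin n))), ⟪u, w⟫ = 0 := by
    intro u hu
    induction hu using Submodule.span_induction with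
    | mem x hx => exact h x hx
    | zero => simp
    | add x y _ _ hx hy => rw [inner_add_left, hx, hy]; ring
    | smul a x _ hx => rw [real_inner_smul_left, hx]; ring
  exact hw (inner_self_eq_zero.mp (hP w hwspan))

end Aux

/-- Existence and uniqueness of the conifold point: if `0` lies in the interior of the
convex hull of the finite set `S ⊆ ℝⁿ` and `c b > 0` for `b ∈ S`, then
`f y = ∑_{b ∈ S} c b * exp ⟪b, y⟫` is strictly convex, tends to `∞` at infinity
(properness), is bounded below, and attains its global minimum at a unique point. -/
theorem stmt_8 {n : ℕ} (S : Finset (EuclideanSpace ℝ (Fin n)))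
    (h0 : (0 : EuclideanSpace ℝ (Fin n)) ∈
      interior (convexHull ℝ (S : Set (EuclideanSpace ℝ (Fin n)))))
    (c : EuclideanSpace ℝ (Fin n) → ℝ) (hc : ∀ b ∈ S, 0 < c b) :
    StrictConvexOn ℝ Set.univ (fun y => ∑ b ∈ S, c b * Real.exp ⟪b, y⟫) ∧
      Filter.Tendsto (fun y => ∑ b ∈ S, c b * Real.exp ⟪b, y⟫)
        (Filter.cocompact (EuclideanSpace ℝ (Fin n))) Filter.atTop ∧
      BddBelow (Set.range fun y => ∑ b ∈ S, c b * Real.exp ⟪b, y⟫) ∧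
      ∃! y₀ : EuclideanSpace ℝ (Fin n),
        ∀ y, (∑ b ∈ S, c b * Real.exp ⟪b, y₀⟫) ≤ ∑ b ∈ S, c b * Real.exp ⟪b, y⟫ := by
  set f : EuclideanSpace ℝ (Fin n) → ℝ := fun y => ∑ b ∈ S, c b * Real.exp ⟪b, y⟫ with hf
  -- S is nonempty
  have hSne : S.Nonempty := by
    rcases Finset.eq_empty_or_nonempty S with rfl | h
    · simp at h0
    · exact h
  -- continuity
  have hcont : Continuous f := by
    apply continuous_finset_sum
    intro b _
    exact continuous_const.mul (Real.continuous_exp.comp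
      (Continuous.inner continuous_const continuous_id))
  -- strict convexity
  have hsc : StrictConvexOn ℝ Set.univ f := by
    refine ⟨convex_univ, ?_⟩
    intro x _ y _ hxy a b ha hb hab
    obtain ⟨b₀, hb₀S, hb₀⟩ := aux_sep S h0 (w := x - y) (sub_ne_zero.mpr hxy)
    have key : ∀ z ∈ S, c z * Real.exp ⟪z, a • x + b • y⟫ ≤
        a * (c z * Real.exp ⟪z, x⟫) + b * (c z * Real.exp ⟪z, y⟫) := by
      intro z _
      have hz : ⟪z, a • x + b • y⟫ = a * ⟪z, x⟫ + b * ⟪z, y⟫ := by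
        rw [inner_add_right, real_inner_smul_right, real_inner_smul_right]
      rw [hz]
      have h1 := convexOn_exp.2 (Set.mem_univ ⟪z, x⟫) (Set.mem_univ ⟪z, y⟫)
        ha.le hb.le hab
      simp only [smul_eq_mul] at h1
      have hcz : 0 ≤ c z := (hc z ‹z ∈ S›).le
      have := mul_le_mul_of_nonneg_left h1 hcz
      linarith
    have keystrict : c b₀ * Real.exp ⟪b₀, a • x + b • y⟫ <
        a * (c b₀ * Real.exp ⟪b₀, x⟫) + b * (c b₀ * Real.exp ⟪b₀, y⟫) := by
      have hz : ⟪b₀, a • x + b • y⟫ = a * ⟪b₀, x⟫ + b * ⟪b₀, y⟫ := by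
        rw [inner_add_right, real_inner_smul_right, real_inner_smul_right]
      rw [hz]
      have hne : ⟪b₀, x⟫ ≠ ⟪b₀, y⟫ := by
        intro h; apply hb₀; rw [inner_sub_right]; rw [h]; ring
      have h1 := strictConvexOn_exp.2 (Set.mem_univ ⟪b₀, x⟫) (Set.mem_univ ⟪b₀, y⟫)
        hne ha hb hab
      simp only [smul_eq_mul] at h1
      have hcz : 0 < c b₀ := hc b₀ hb₀S
      have := mul_lt_mul_of_pos_left h1 hcz
      linarith
    calc f (a • x + b • y) = ∑ z ∈ S, c z * Real.exp ⟪z, a • x + b • y⟫ := rfl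
      _ < ∑ z ∈ S, (a * (c z * Real.exp ⟪z, x⟫) + b * (c z * Real.exp ⟪z, y⟫)) :=
          Finset.sum_lt_sum key ⟨b₀, hb₀S, keystrict⟩
      _ = a • f x + b • f y := by
          rw [Finset.sum_add_distrib, ← Finset.mul_sum, ← Finset.mul_sum]
          simp [hf, smul_eq_mul]
  -- lower bound by cmin * exp (ε/2 * ‖y‖)
  obtain ⟨ε, hε, hball⟩ := Metric.mem_nhds_iff.mp (mem_interior_iff_mem_nhds.mp h0)
  set cmin : ℝ := S.inf' hSne c with hcmin
  have hcminpos : 0 < cmin := (Finset.lt_inf'_iff hSne).mpr hc |>.trans_le le_rfl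
  have hlow : ∀ y, cmin * Real.exp (ε / 2 * ‖y‖) ≤ f y := by
    intro y
    -- the maximum of ⟪b, y⟫ over S
    set M : ℝ := S.sup' hSne (fun b => ⟪b, y⟫) with hM
    obtain ⟨b₀, hb₀S, hb₀⟩ := S.exists_mem_eq_sup' hSne (fun b => ⟪b, y⟫)
    -- any point of the hull has ⟪v,y⟫ ≤ M
    have hhull : ∀ v ∈ convexHull ℝ (S : Set (EuclideanSpace ℝ (Fin n))), ⟪v, y⟫ ≤ M := by
      intro v hv
      have hlin : IsLinearMap ℝ (fun x : EuclideanSpace ℝ (Fin n) => ⟪x, y⟫) :=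
        ⟨fun u v => inner_add_left u v y, fun t u => real_inner_smul_left u y t⟩
      have hconv : Convex ℝ {x : EuclideanSpace ℝ (Fin n) | ⟪x, y⟫ ≤ M} :=
        convex_halfSpace_le hlin M
      have hsub : convexHull ℝ (S : Set (EuclideanSpace ℝ (Fin n))) ⊆
          {x | ⟪x, y⟫ ≤ M} :=
        convexHull_min (fun b hb => Finset.le_sup' (fun b => ⟪b, y⟫) (Finset.mem_coe.mp hb)) hconv
      exact hsub hv
    have hMy : ε / 2 * ‖y‖ ≤ M := by
      rcases eq_or_ne y 0 with rfl | hy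
      · simpa using hhull 0 (interior_subset h0)
      · have hynorm : (0:ℝ) < ‖y‖ := norm_pos_iff.mpr hy
        set v : EuclideanSpace ℝ (Fin n) := (ε / 2 / ‖y‖) • y with hv
        have hvball : v ∈ Metric.ball (0 : EuclideanSpace ℝ (Fin n)) ε := by
          rw [Metric.mem_ball, dist_zero_right, hv, norm_smul]
          rw [Real.norm_eq_abs, abs_of_pos (by positivity)]
          rw [div_mul_cancel₀ _ (ne_of_gt hynorm)]
          linarith
        have := hhull v (hball hvball)
        rw [hv, real_inner_smul_left, real_inner_self_eq_norm_sq] at this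
        calc ε / 2 * ‖y‖ = ε / 2 / ‖y‖ * (‖y‖ ^ 2) := by
              field_simp
          _ ≤ M := this
    calc cmin * Real.exp (ε / 2 * ‖y‖) ≤ c b₀ * Real.exp ⟪b₀, y⟫ := by
          apply mul_le_mul (Finset.inf'_le c hb₀S)
            (Real.exp_le_exp.mpr (hMy.trans hb₀.le)) (Real.exp_pos _).le (hc b₀ hb₀S).le
      _ ≤ f y := Finset.single_le_sum (f := fun z => c z * Real.exp ⟪z, y⟫)
          (fun z hz => mul_nonneg (hc z hz).le (Real.exp_pos _).le) hb₀S
  -- properness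
  have hproper : Filter.Tendsto f (Filter.cocompact (EuclideanSpace ℝ (Fin n)))
      Filter.atTop := by
    apply Filter.tendsto_atTop_mono hlow
    have h1 : Filter.Tendsto (fun y : EuclideanSpace ℝ (Fin n) => ε / 2 * ‖y‖)
        (Filter.cocompact _) Filter.atTop :=
      (Filter.tendsto_const_mul_atTop_of_pos (by linarith)).mpr tendsto_norm_cocompact_atTop
    exact (Real.tendsto_exp_atTop.comp h1).const_mul_atTop hcminpos
  refine ⟨hsc, hproper, ⟨0, ?_⟩, ?_⟩
  · rintro _ ⟨y, rfl⟩
    exact Finset.sum_nonneg fun b hb => mul_nonneg (hc b hb).le (Real.exp_pos _).le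
  · obtain ⟨y₀, hy₀⟩ := hcont.exists_forall_le hproper
    refine ⟨y₀, hy₀, fun y₁ hy₁ => ?_⟩
    exact hsc.eq_of_isMinOn (isMinOn_iff.mpr fun y _ => hy₁ y)
      (isMinOn_iff.mpr fun y _ => hy₀ y) (Set.mem_univ _) (Set.mem_univ _)
end

section
/- Let $R$ be a commutative ring, $I\subseteq J$ ideals of $R$ with $I$ finitely generated, and $M$ an $R$-module. Let $\widehat M_I$ denote the $I$-adic completion of $M$ and $(\widehat M_I)\widehat{\ }_J$ the $J$-adic completion of $\widehat M_I$. Then $(\widehat M_I)\widehat{\ }_J\cong \widehat M_J$, the $J$-adic completion of $M$. -/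
open Submodule

section Aux
variable {R : Type*} [CommRing R] {M : Type*} [AddCommGroup M] [Module R M]

lemma stmt11_exists_sum_of_mem_span_smul (s : Finset R) (P : Submodule R M) {x : M}
    (hx : x ∈ Ideal.span (s : Set R) • P) :
    ∃ c : s → M, (∀ t, c t ∈ P) ∧ x = ∑ t : s, (t : R) • c t := by
  refine Submodule.smul_induction_on hx ?_ ?_
  · intro r hr p hp
    obtain ⟨f, -, hf⟩ := mem_span_finset.mp hr
    refine ⟨fun t => f t • p, fun t => P.smul_mem _ hp, ?_⟩
    rw [← hf, Finset.sum_smul, Finset.sum_coe_sort s (fun t => t • (f t • p))]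
    exact Finset.sum_congr rfl fun t _ => by rw [smul_smul, smul_eq_mul, mul_comm]
  · rintro x y ⟨c, hc, rfl⟩ ⟨c', hc', rfl⟩
    exact ⟨c + c', fun t => P.add_mem (hc t) (hc' t), by
      simp [Finset.sum_add_distrib, smul_add]⟩

lemma stmt11_ker_eval (I : Ideal R) (M : Type*) [AddCommGroup M] [Module R M] (hI : I.FG) (n : ℕ) :
    LinearMap.ker (AdicCompletion.eval I M n) =
      (I ^ n • ⊤ : Submodule R (AdicCompletion I M)) := by
  apply le_antisymm
  · intro x hx
    obtain ⟨f, rfl⟩ := AdicCompletion.mk_surjective I M x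
    have hfn : f n ∈ (I ^ n • ⊤ : Submodule R M) := by
      have h0 : (AdicCompletion.mk I M f).val n = 0 := hx
      rwa [AdicCompletion.mk_apply_coe, Submodule.mkQ_apply,
        Submodule.Quotient.mk_eq_zero] at h0
    obtain ⟨s, hs⟩ := Submodule.FG.pow hI n
    have hs' : Ideal.span (s : Set R) = I ^ n := hs
    have h0 : f n ∈ Ideal.span (s : Set R) • (⊤ : Submodule R M) := by rw [← hs'] at hfn; exact hfn
    obtain ⟨c0, -, hc0⟩ := stmt11_exists_sum_of_mem_span_smul s ⊤ h0
    have hdiff : ∀ m : ℕ, f (n + m + 1) - f (n + m) ∈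
        Ideal.span (s : Set R) • (I ^ m • ⊤ : Submodule R M) := by
      intro m
      have h1 : f (n + m) - f (n + m + 1) ∈ (I ^ (n + m) • ⊤ : Submodule R M) :=
        (Submodule.Quotient.eq _).mp (SModEq.def.mp (f.property (Nat.le_succ (n + m))))
      have h2 : f (n + m + 1) - f (n + m) ∈ (I ^ (n + m) • ⊤ : Submodule R M) := by
        simpa [neg_sub] using Submodule.neg_mem _ h1
      have h3 : (I ^ (n + m) • ⊤ : Submodule R M)
          = Ideal.span (s : Set R) • (I ^ m • ⊤ : Submodule R M) := by
        rw [hs', ← Submodule.smul_assoc, smul_eq_mul, ← pow_add]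
      rwa [h3] at h2
    choose d hdP hdsum using fun m => stmt11_exists_sum_of_mem_span_smul s _ (hdiff m)
    set g : s → ℕ → M := fun t m => c0 t + ∑ i ∈ Finset.range m, d i t with hg
    have hgc : ∀ t : s, ∀ m : ℕ, g t m ≡ g t (m + 1) [SMOD (I ^ m • ⊤ : Submodule R M)] := by
      intro t m
      rw [SModEq.def, Submodule.Quotient.eq]
      have : g t m - g t (m + 1) = -(d m t) := by
        simp [hg, Finset.sum_range_succ]
      rw [this]
      exact Submodule.neg_mem _ (hdP m t)
    have key : AdicCompletion.mk I M f
        = ∑ t : s, (t : R) • AdicCompletion.mk I M (AdicCompletion.AdicCauchySequence.mk I M (g t) (hgc t)) := by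
      ext k
      have hsum : ∑ t : s, (t : R) • g t k = f (n + k) := by
        have htel : ∑ i ∈ Finset.range k, (f (n + i + 1) - f (n + i)) = f (n + k) - f (n + 0) := by
          simpa [add_assoc] using Finset.sum_range_sub (fun i => f (n + i)) k
        calc ∑ t : s, (t : R) • g t k
            = ∑ t : s, ((t : R) • c0 t + ∑ i ∈ Finset.range k, (t : R) • d i t) := by
              simp [hg, smul_add, Finset.smul_sum]
          _ = (∑ t : s, (t : R) • c0 t) + ∑ i ∈ Finset.range k, ∑ t : s, (t : R) • d i t := by
              rw [Finset.sum_add_distrib, Finset.sum_comm]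
          _ = f n + ∑ i ∈ Finset.range k, (f (n + i + 1) - f (n + i)) := by
              rw [← hc0]; congr 1; exact Finset.sum_congr rfl fun i _ => (hdsum i).symm
          _ = f (n + k) := by rw [htel]; simp
      have hvk : (AdicCompletion.mk I M f).val k
          = Submodule.Quotient.mk (p := (I ^ k • ⊤ : Submodule R M)) (f (n + k)) := by
        rw [AdicCompletion.mk_apply_coe, Submodule.mkQ_apply,
          AdicCompletion.AdicCauchySequence.mk_eq_mk (Nat.le_add_left k n)]
      rw [hvk, AdicCompletion.val_sum]
      simp only [AdicCompletion.val_smul, AdicCompletion.mk_apply_coe, Submodule.mkQ_apply,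
        AdicCompletion.AdicCauchySequence.mk_coe]
      rw [← hsum]
      simp [← Submodule.mkQ_apply, map_sum, map_smul]
    rw [key]
    exact Submodule.sum_mem _ fun t _ =>
      Submodule.smul_mem_smul (hs' ▸ Ideal.subset_span t.2) Submodule.mem_top
  · rw [Submodule.smul_le]
    intro r hr x _
    rw [LinearMap.mem_ker, map_smul]
    obtain ⟨m, hm⟩ := Submodule.Quotient.mk_surjective _ (AdicCompletion.eval I M n x)
    rw [← hm, ← Submodule.Quotient.mk_smul, Submodule.Quotient.mk_eq_zero]
    exact Submodule.smul_mem_smul hr Submodule.mem_top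

theorem AdicCompletion.transitionMap_mk (I : Ideal R) (M : Type*) [AddCommGroup M] [Module R M]
    {m n : ℕ} (hmn : m ≤ n) (x : M) :
    AdicCompletion.transitionMap I M hmn (Submodule.Quotient.mk x) = Submodule.Quotient.mk x :=
  rfl

end Aux


section Main

namespace Stmt11

variable {R : Type*} [CommRing R] (I J : Ideal R) (M : Type*) [AddCommGroup M] [Module R M]

/-- The natural map from the `I`-adic completion to `M ⧸ J^k M`. -/
noncomputable def q (hIJ : I ≤ J) (k : ℕ) :
    AdicCompletion I M →ₗ[R] M ⧸ (J ^ k • ⊤ : Submodule R M) :=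
  Submodule.mapQ _ _ LinearMap.id
      (by simpa using Submodule.smul_mono_left (Ideal.pow_right_mono hIJ k))
    ∘ₗ AdicCompletion.eval I M k

lemma q_val (hIJ : I ≤ J) (k : ℕ) (x : AdicCompletion I M) (a : M)
    (ha : x.val k = Submodule.Quotient.mk a) :
    q I J M hIJ k x = Submodule.Quotient.mk a := by
  have : AdicCompletion.eval I M k x = x.val k := rfl
  rw [q, LinearMap.comp_apply, this, ha, Submodule.mapQ_apply, LinearMap.id_apply]

lemma q_compat (hIJ : I ≤ J) {m n : ℕ} (h : m ≤ n) (x : AdicCompletion I M) :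
    AdicCompletion.transitionMap J M h (q I J M hIJ n x) = q I J M hIJ m x := by
  obtain ⟨a, ha⟩ := Submodule.Quotient.mk_surjective _ (x.val n)
  have ham : x.val m = Submodule.Quotient.mk a := by
    rw [← AdicCompletion.transitionMap_comp_eval_apply I M h x, ← ha,
      AdicCompletion.transitionMap_mk]
  rw [q_val I J M hIJ n x a ha.symm, q_val I J M hIJ m x a ham,
    AdicCompletion.transitionMap_mk]

lemma q_surjective (hIJ : I ≤ J) (k : ℕ) : Function.Surjective (q I J M hIJ k) := by
  intro y
  obtain ⟨a, ha⟩ := Submodule.Quotient.mk_surjective _ y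
  exact ⟨AdicCompletion.of I M a, by rw [q_val I J M hIJ k _ a (by simp [AdicCompletion.of_apply]), ha]⟩

lemma ker_q (hI : I.FG) (hIJ : I ≤ J) (k : ℕ) :
    LinearMap.ker (q I J M hIJ k) = (J ^ k • ⊤ : Submodule R (AdicCompletion I M)) := by
  apply le_antisymm
  · intro x hx
    obtain ⟨a, ha⟩ := Submodule.Quotient.mk_surjective _ (x.val k)
    rw [LinearMap.mem_ker, q_val I J M hIJ k x a ha.symm,
      Submodule.Quotient.mk_eq_zero] at hx
    have h1 : x - AdicCompletion.of I M a ∈ LinearMap.ker (AdicCompletion.eval I M k) := by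
      rw [LinearMap.mem_ker, map_sub]
      have h2 : AdicCompletion.eval I M k x = x.val k := rfl
      rw [h2, AdicCompletion.eval_of, Submodule.mkQ_apply, ← ha, sub_self]
    rw [stmt11_ker_eval I M hI k] at h1
    have h2 : x - AdicCompletion.of I M a ∈ (J ^ k • ⊤ : Submodule R (AdicCompletion I M)) :=
      Submodule.smul_mono_left (Ideal.pow_right_mono hIJ k) h1
    have h3 : AdicCompletion.of I M a ∈ (J ^ k • ⊤ : Submodule R (AdicCompletion I M)) := by
      have h4 := Submodule.mem_map_of_mem (f := AdicCompletion.of I M) hx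
      rw [Submodule.map_smul''] at h4
      exact Submodule.smul_mono le_rfl le_top h4
    simpa using Submodule.add_mem _ h2 h3
  · rw [Submodule.smul_le]
    intro r hr x _
    rw [LinearMap.mem_ker, map_smul]
    obtain ⟨a, ha⟩ := Submodule.Quotient.mk_surjective _ (q I J M hIJ k x)
    rw [← ha, ← Submodule.Quotient.mk_smul, Submodule.Quotient.mk_eq_zero]
    exact Submodule.smul_mem_smul hr Submodule.mem_top

/-- The induced isomorphism on quotients. -/
noncomputable def e (hI : I.FG) (hIJ : I ≤ J) (k : ℕ) :
    (AdicCompletion I M ⧸ (J ^ k • ⊤ : Submodule R (AdicCompletion I M)))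
      ≃ₗ[R] M ⧸ (J ^ k • ⊤ : Submodule R M) :=
  LinearEquiv.ofBijective
    (Submodule.liftQ _ (q I J M hIJ k) (le_of_eq (ker_q I J M hI hIJ k).symm))
    ⟨by
      rw [← LinearMap.ker_eq_bot]
      exact Submodule.ker_liftQ_eq_bot _ _ _ (le_of_eq (ker_q I J M hI hIJ k)),
     by
      rw [← LinearMap.range_eq_top, Submodule.range_liftQ]
      exact LinearMap.range_eq_top.mpr (q_surjective I J M hIJ k)⟩

lemma e_mk (hI : I.FG) (hIJ : I ≤ J) (k : ℕ) (y : AdicCompletion I M) :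
    e I J M hI hIJ k (Submodule.Quotient.mk y) = q I J M hIJ k y := by
  unfold e
  exact Submodule.liftQ_apply (h := le_of_eq (ker_q I J M hI hIJ k).symm) _ _ _

lemma e_transition (hI : I.FG) (hIJ : I ≤ J) {m n : ℕ} (h : m ≤ n)
    (z : AdicCompletion I M ⧸ (J ^ n • ⊤ : Submodule R (AdicCompletion I M))) :
    e I J M hI hIJ m (AdicCompletion.transitionMap J (AdicCompletion I M) h z)
      = AdicCompletion.transitionMap J M h (e I J M hI hIJ n z) := by
  obtain ⟨y, rfl⟩ := Submodule.Quotient.mk_surjective _ z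
  rw [AdicCompletion.transitionMap_mk, e_mk, e_mk, q_compat]

/-- The forward map. -/
noncomputable def F (hI : I.FG) (hIJ : I ≤ J) :
    AdicCompletion J (AdicCompletion I M) →ₗ[R] AdicCompletion J M :=
  AdicCompletion.lift J
    (fun k => (e I J M hI hIJ k : _ →ₗ[R] M ⧸ (J ^ k • ⊤ : Submodule R M))
      ∘ₗ AdicCompletion.eval J (AdicCompletion I M) k)
    (by
      intro m n h
      refine LinearMap.ext fun x => ?_
      simp only [LinearMap.comp_apply, LinearEquiv.coe_coe]
      have h1 : AdicCompletion.eval J (AdicCompletion I M) n x = x.val n := rfl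
      have h2 : AdicCompletion.eval J (AdicCompletion I M) m x = x.val m := rfl
      rw [h1, h2,
        ← AdicCompletion.transitionMap_comp_eval_apply J (AdicCompletion I M) h x]
      exact (e_transition I J M hI hIJ h _).symm)

/-- The inverse map. -/
noncomputable def G (hI : I.FG) (hIJ : I ≤ J) :
    AdicCompletion J M →ₗ[R] AdicCompletion J (AdicCompletion I M) :=
  AdicCompletion.lift J
    (fun k => ((e I J M hI hIJ k).symm : _ →ₗ[R] _)
      ∘ₗ AdicCompletion.eval J M k)
    (by
      intro m n h
      refine LinearMap.ext fun x => ?_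
      simp only [LinearMap.comp_apply, LinearEquiv.coe_coe]
      have h1 : AdicCompletion.eval J M n x = x.val n := rfl
      have h2 : AdicCompletion.eval J M m x = x.val m := rfl
      rw [h1, h2]
      apply (e I J M hI hIJ m).injective
      rw [e_transition I J M hI hIJ h, LinearEquiv.apply_symm_apply,
        LinearEquiv.apply_symm_apply,
        AdicCompletion.transitionMap_comp_eval_apply J M h x])

end Stmt11

end Main

/-- Composition of adic completions (footnote to Lemma 3.24): for ideals `I ⊆ J` of a
commutative ring `R` with `I` finitely generated, and an `R`-module `M`, the `J`-adic
completion of the `I`-adic completion of `M` is the `J`-adic completion of `M`. -/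
theorem stmt_11 {R : Type*} [CommRing R] (I J : Ideal R) (hIJ : I ≤ J) (hI : I.FG)
    {M : Type*} [AddCommGroup M] [Module R M] :
    Nonempty ((AdicCompletion J (AdicCompletion I M)) ≃ₗ[R] AdicCompletion J M) := by
  refine ⟨LinearEquiv.ofLinear (Stmt11.F I J M hI hIJ) (Stmt11.G I J M hI hIJ) ?_ ?_⟩
  · apply LinearMap.ext
    intro x
    apply AdicCompletion.ext
    intro k
    show (Stmt11.e I J M hI hIJ k) ((Stmt11.e I J M hI hIJ k).symm (x.val k)) = x.val k
    exact LinearEquiv.apply_symm_apply _ _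
  · apply LinearMap.ext
    intro x
    apply AdicCompletion.ext
    intro k
    show (Stmt11.e I J M hI hIJ k).symm ((Stmt11.e I J M hI hIJ k) (x.val k)) = x.val k
    exact LinearEquiv.symm_apply_apply _ _
end

section
/- Let $0\to A\xrightarrow{f} B\xrightarrow{g} C\to 0$ be a short exact sequence of finitely generated abelian groups with $A$ torsion-free. If the induced map on torsion subgroups $B_{\mathrm{tor}}\to C_{\mathrm{tor}}$ is surjective, then the sequence splits, i.e., there exists a homomorphism $s\colon C\to B$ with $g\circ s=\mathrm{id}_C$. -/
private lemma mem_torsion_iff_finOrder {G : Type*} [AddCommGroup G] (x : G) :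
    x ∈ Submodule.torsion ℤ G ↔ IsOfFinAddOrder x := by
  rw [show (x ∈ Submodule.torsion ℤ G) ↔ x ∈ (Submodule.torsion ℤ G).toAddSubgroup from Iff.rfl,
    Submodule.torsion_int]
  exact AddCommGroup.mem_torsion x

/-- Splitting criterion for short exact sequences of finitely generated abelian groups:
if `0 → A → B → C → 0` is exact with `A` torsion-free and the induced map on torsion
subgroups `B_tor → C_tor` is surjective, then the sequence splits. -/
theorem stmt_13 {A B C : Type*} [AddCommGroup A] [AddCommGroup B] [AddCommGroup C]
    [AddGroup.FG A] [AddGroup.FG B] [AddGroup.FG C]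
    (f : A →+ B) (g : B →+ C) (hf : Function.Injective f) (hg : Function.Surjective g)
    (hexact : ∀ b : B, g b = 0 ↔ b ∈ f.range)
    (htf : ∀ a : A, IsOfFinAddOrder a → a = 0)
    (hsurj : ∀ c : C, IsOfFinAddOrder c → ∃ b : B, IsOfFinAddOrder b ∧ g b = c) :
    ∃ s : C →+ B, g.comp s = AddMonoidHom.id C := by
  -- linear map versions
  set gl : B →ₗ[ℤ] C := g.toIntLinearMap with hgl
  -- Q := C / torsion, free module
  haveI : Module.Finite ℤ C := Module.Finite.iff_addGroup_fg.mpr (inferInstance)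
  set T := Submodule.torsion ℤ C with hT
  set Q := C ⧸ T with hQ
  set π : C →ₗ[ℤ] Q := T.mkQ with hπ
  haveI : Module.Finite ℤ Q := Module.Finite.quotient ℤ T
  haveI : Module.Free ℤ Q := Module.free_of_finite_type_torsion_free'
  -- section r of π
  obtain ⟨r, hr⟩ := Module.projective_lifting_property π (LinearMap.id) (T.mkQ_surjective)
  -- lift ℓ of r through g
  obtain ⟨ℓ, hℓ⟩ := Module.projective_lifting_property gl r hg
  -- g maps torsion B into torsion C
  have hmap : ∀ x ∈ Submodule.torsion ℤ B, gl x ∈ T := by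
    intro x hx
    rw [mem_torsion_iff_finOrder, isOfFinAddOrder_iff_nsmul_eq_zero] at hx ⊢
    obtain ⟨n, hn, h0⟩ := hx
    exact ⟨n, hn, by rw [show gl x = g x from rfl, ← map_nsmul, h0, map_zero]⟩
  set g' : Submodule.torsion ℤ B →ₗ[ℤ] T := gl.restrict hmap with hg'
  have hbij : Function.Bijective g' := by
    constructor
    · intro x y hxy
      have hgz : g ((x : B) - y) = 0 := by
        have : (g' x : C) = g' y := by rw [hxy]
        simp only [hg', LinearMap.restrict_coe_apply] at this
        rw [map_sub]
        exact sub_eq_zero.mpr this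
      obtain ⟨a, ha⟩ := (hexact _).mp hgz
      have hxyt : IsOfFinAddOrder ((x : B) - y) := by
        have := sub_mem x.2 y.2
        rwa [mem_torsion_iff_finOrder] at this
      have : IsOfFinAddOrder a := by
        rw [isOfFinAddOrder_iff_nsmul_eq_zero] at hxyt ⊢
        obtain ⟨n, hn, hn0⟩ := hxyt
        refine ⟨n, hn, hf ?_⟩
        rw [map_nsmul, ha, hn0, map_zero]
      have ha0 : a = 0 := htf a this
      have : (x : B) = y := by
        have := ha.symm
        rw [ha0, map_zero] at this
        exact sub_eq_zero.mp this
      exact Subtype.ext this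
    · rintro ⟨c, hc⟩
      obtain ⟨b, hb, hgb⟩ := hsurj c ((mem_torsion_iff_finOrder c).mp hc)
      refine ⟨⟨b, (mem_torsion_iff_finOrder b).mpr hb⟩, ?_⟩
      apply Subtype.ext
      simpa [hg', LinearMap.restrict_coe_apply, hgl] using hgb
  set e := LinearEquiv.ofBijective g' hbij with he
  set σ : T →ₗ[ℤ] B := (Submodule.torsion ℤ B).subtype ∘ₗ (e.symm : T →ₗ[ℤ] Submodule.torsion ℤ B) with hσ
  -- projection p : C →ₗ T, c ↦ c - r (π c)
  have hker : ∀ c : C, c - r (π c) ∈ T := by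
    intro c
    rw [← Submodule.Quotient.mk_eq_zero (p := T)]
    have : π (c - r (π c)) = 0 := by
      rw [map_sub]
      have : π (r (π c)) = π c := by
        have := congrArg (fun h => h (π c)) hr
        simpa using this
      rw [this, sub_self]
    exact this
  set p : C →ₗ[ℤ] T := (LinearMap.id - r ∘ₗ π).codRestrict T (fun c => by simpa using hker c) with hp
  set s : C →ₗ[ℤ] B := σ ∘ₗ p + ℓ ∘ₗ π with hs
  refine ⟨s.toAddMonoidHom, ?_⟩
  ext c
  have h1 : g (σ (p c)) = ((p c : T) : C) := congrArg Subtype.val (e.apply_symm_apply (p c))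
  have h2 : g (ℓ (π c)) = r (π c) := by
    have := congrArg (fun h => h (π c)) hℓ
    simpa [hgl] using this
  have hpc : ((p c : T) : C) = c - r (π c) := rfl
  simp only [AddMonoidHom.coe_comp, Function.comp_apply, LinearMap.toAddMonoidHom_coe,
    AddMonoidHom.id_apply]
  rw [hs]
  simp only [LinearMap.add_apply, LinearMap.coe_comp, Function.comp_apply]
  rw [map_add, h1, h2, hpc]
  abel
end
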